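/- Let D be a C*-algebra (which is in particular a complex algebra), N ≥ 1, and let S_{ij} ∈ D (1 ≤ i,j ≤ N) satisfy the defining relations of the quantum Cuntz–Krieger algebra FO(K(M_N(ℂ),tr)) of the complete quantum graph on M_N(ℂ): Σ_{k,l} S_{ik} S_{lk}^* S_{lj} = S_{ij} and Σ_r S_{ri}^* S_{rj} = δ_{ij} · N · Σ_{r,s} S_{rs} S_{rs}^* for all i, j. Let U ∈ M_N(ℂ) be a unitary matrix and λ ∈ ℂ with |λ| = 1, and define T_{ij} := λ · Σ_{p,q} U_{ip} \overline{U_{jq}} · S_{pq}, i.e. T = λ·U S U^*. Then the elements T_{ij} again satisfy both relations: Σ_{k,l} T_{ik} T_{lk}^* T_{lj} = T_{ij} and Σ_r T_{ri}^* T_{rj} = δ_{ij} · N · Σ_{r,s} T_{rs} T_{rs}^*. -/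

import Mathlib

/-!
Since `D` need not be unital, pass to its unitization and arrange the generators in a matrix
`S ∈ M_N(D̃)`. The relations become `S Sᴴ S = S` and `Sᴴ S = N · tr(S Sᴴ) · 1`, and for unitaries
`U, V ∈ M_N(ℂ)` the substitution `S ↦ V S Uᴴ` (here `V = λU`) transforms both sides of each
relation by the same conjugations; `tr(S Sᴴ)` is invariant because the entries of scalar matrices
are central.
-/

section StarMonoid

variable {R : Type*} [Monoid R] [StarMul R] {V W : R}

theorem Unitary.star_mul_self_mul (hW : W ∈ unitary R) (x : R) : star W * (W * x) = x := by
  rw [← mul_assoc, Unitary.star_mul_self_of_mem hW, one_mul]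

theorem Unitary.conj_mul_star_conj (hW : W ∈ unitary R) (X : R) :
    V * X * star W * star (V * X * star W) = V * (X * star X) * star V := by
  simp only [star_mul, star_star, mul_assoc, Unitary.star_mul_self_mul hW]

theorem Unitary.star_conj_mul_conj (hV : V ∈ unitary R) (X : R) :
    star (V * X * star W) * (V * X * star W) = W * (star X * X) * star W := by
  simp only [star_mul, star_star, mul_assoc, Unitary.star_mul_self_mul hV]

theorem Unitary.conj_mul_star_conj_mul_conj (hV : V ∈ unitary R) (hW : W ∈ unitary R) (X : R) :
    V * X * star W * star (V * X * star W) * (V * X * star W)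
      = V * (X * star X * X) * star W := by
  simp only [star_mul, star_star, mul_assoc, Unitary.star_mul_self_mul hV,
    Unitary.star_mul_self_mul hW]

end StarMonoid

namespace Matrix

variable {n R A B : Type*} [Fintype n]

theorem trace_mul_comm_of_commute [NonUnitalSemiring A] {V M : Matrix n n A}
    (h : ∀ i j k l, Commute (V i j) (M k l)) : trace (V * M) = trace (M * V) := by
  simp only [trace, diag, mul_apply]
  rw [Finset.sum_comm]
  exact Finset.sum_congr rfl fun i _ => Finset.sum_congr rfl fun j _ => (h j i i j).eq

theorem map_algebraMap_mul_mul_conjTranspose_apply [CommSemiring R] [StarRing R] [Semiring A]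
    [StarRing A] [Algebra R A] [StarModule R A] (V U : Matrix n n R) (X : Matrix n n A) (i j : n) :
    (V.map (algebraMap R A) * X * (U.map (algebraMap R A))ᴴ) i j
      = ∑ p, ∑ q, (V i p * star (U j q)) • X p q := by
  simp only [mul_apply, map_apply, conjTranspose_apply, ← algebraMap_star_comm, Finset.sum_mul]
  rw [Finset.sum_comm]
  refine Finset.sum_congr rfl fun p _ => Finset.sum_congr rfl fun q _ => ?_
  rw [mul_assoc, ← Algebra.commutes, ← mul_assoc, ← map_mul, ← Algebra.smul_def]

variable [DecidableEq n]

theorem trace_unitary_conj_of_commute [Semiring A] [StarRing A] {W : Matrix n n A}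
    (hW : W ∈ unitary (Matrix n n A)) (hcomm : ∀ i j a, Commute (W i j) a) (M : Matrix n n A) :
    trace (W * M * star W) = trace M := by
  rw [mul_assoc, trace_mul_comm_of_commute fun i j _ _ => hcomm i j _, mul_assoc,
    Unitary.star_mul_self_of_mem hW, mul_one]

theorem map_algebraMap_commute_diagonal [CommSemiring R] [Semiring A] [Algebra R A]
    (U : Matrix n n R) (a : A) :
    Commute (U.map (algebraMap R A)) (diagonal fun _ => a) := by
  ext i j
  rw [mul_diagonal, diagonal_mul, map_apply]
  exact Algebra.commutes _ _

theorem map_algebraMap_mem_unitary [CommRing R] [StarRing R] [Ring A] [StarRing A] [Algebra R A]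
    [StarModule R A] {U : Matrix n n R} (hU : U ∈ unitaryGroup n R) :
    U.map (algebraMap R A) ∈ unitary (Matrix n n A) := by
  have hstar : (U.map (algebraMap R A))ᴴ = Uᴴ.map (algebraMap R A) :=
    (conjTranspose_map _ algebraMap_star_comm).symm
  constructor
  · rw [star_eq_conjTranspose, hstar, ← Matrix.map_mul, show Uᴴ * U = 1 from hU.1,
      Matrix.map_one _ (map_zero _) (map_one _)]
  · rw [star_eq_conjTranspose, hstar, ← Matrix.map_mul, show U * Uᴴ = 1 from hU.2,
      Matrix.map_one _ (map_zero _) (map_one _)]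

/-- The defining relations of `FO(K(M_n(ℂ), tr))` for the matrix `M = (S_ij)` of generators. -/
def IsQuantumCuntzKriegerFamily [NonUnitalRing A] [StarRing A] [Module ℂ A]
    (M : Matrix n n A) : Prop :=
  M * Mᴴ * M = M ∧ Mᴴ * M = diagonal fun _ => (Fintype.card n : ℂ) • (M * Mᴴ).trace

section NonUnital

variable [NonUnitalRing A] [StarRing A] [Module ℂ A]

theorem isQuantumCuntzKriegerFamily_of_iff {N : ℕ} (S : Fin N → Fin N → A) :
    IsQuantumCuntzKriegerFamily (of S) ↔
      (∀ i j, ∑ k, ∑ l, S i k * star (S l k) * S l j = S i j) ∧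
      (∀ i j, ∑ r, star (S r i) * S r j
        = if i = j then (N : ℂ) • ∑ r, ∑ s, S r s * star (S r s) else 0) := by
  have h1 (i j) : (of S * (of S)ᴴ * of S) i j = ∑ k, ∑ l, S i k * star (S l k) * S l j := by
    simp only [mul_apply, conjTranspose_apply, of_apply, Finset.sum_mul]
    exact Finset.sum_comm
  have h2 (i j) : ((of S)ᴴ * of S) i j = ∑ r, star (S r i) * S r j := rfl
  have htr : (of S * (of S)ᴴ).trace = ∑ r, ∑ s, S r s * star (S r s) := rfl
  simp only [IsQuantumCuntzKriegerFamily, ← Matrix.ext_iff, h1, h2, htr, diagonal_apply,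
    Fintype.card_fin, of_apply]

theorem isQuantumCuntzKriegerFamily_map_iff [NonUnitalRing B] [StarRing B] [Module ℂ B]
    {F : Type*} [FunLike F A B] [NonUnitalAlgHomClass F ℂ A B] [StarHomClass F A B]
    {f : F} (hf : Function.Injective f) {M : Matrix n n A} :
    IsQuantumCuntzKriegerFamily (M.map f) ↔ IsQuantumCuntzKriegerFamily M := by
  have hdiag (a : A) : (diagonal fun _ : n => a).map f = diagonal fun _ => f a :=
    diagonal_map (map_zero f)
  simp only [IsQuantumCuntzKriegerFamily, ← conjTranspose_map f (map_star f), ← Matrix.map_mul,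
    ← AddMonoidHom.map_trace, ← map_smul, ← hdiag, (map_injective hf).eq_iff]

end NonUnital

theorem IsQuantumCuntzKriegerFamily.map_algebraMap_conj [Ring A] [StarRing A] [Algebra ℂ A]
    [StarModule ℂ A] {X : Matrix n n A} (hX : IsQuantumCuntzKriegerFamily X)
    {U V : Matrix n n ℂ} (hU : U ∈ unitaryGroup n ℂ) (hV : V ∈ unitaryGroup n ℂ) :
    IsQuantumCuntzKriegerFamily (V.map (algebraMap ℂ A) * X * (U.map (algebraMap ℂ A))ᴴ) := by
  have hU' := map_algebraMap_mem_unitary (A := A) hU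
  have hV' := map_algebraMap_mem_unitary (A := A) hV
  obtain ⟨h1, h2⟩ := hX
  simp only [IsQuantumCuntzKriegerFamily, ← star_eq_conjTranspose] at h1 h2 ⊢
  refine ⟨?_, ?_⟩
  · rw [Unitary.conj_mul_star_conj_mul_conj hV' hU', h1]
  · rw [Unitary.star_conj_mul_conj hV', Unitary.conj_mul_star_conj hU', h2,
      trace_unitary_conj_of_commute hV' fun _ _ _ => Algebra.commutes _ _,
      (map_algebraMap_commute_diagonal U _).eq, mul_assoc,
      Unitary.mul_star_self_of_mem hU', mul_one]

end Matrix

theorem statement_12_general (D : Type*) [NonUnitalNormedRing D] [StarRing D]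
    [NormedSpace ℂ D] [IsScalarTower ℂ D D] [SMulCommClass ℂ D D]
    [StarModule ℂ D]
    (N : ℕ)
    -- generators of FO(K(M_N(ℂ), tr)): relations of the complete quantum graph on M_N(ℂ)
    (S : Fin N → Fin N → D)
    (h1 : ∀ i j, ∑ k, ∑ l, S i k * star (S l k) * S l j = S i j)
    (h2 : ∀ i j, ∑ r, star (S r i) * S r j
      = if i = j then (N : ℂ) • ∑ r, ∑ s, S r s * star (S r s) else 0)
    -- a unitary U ∈ M_N(ℂ) and λ ∈ U(1)
    (U : Matrix (Fin N) (Fin N) ℂ) (hU : U ∈ Matrix.unitaryGroup (Fin N) ℂ)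
    (lam : ℂ) (hlam : ‖lam‖ = 1)
    -- T = λ U S U^*
    (T : Fin N → Fin N → D)
    (hT : ∀ i j, T i j = ∑ p, ∑ q, (lam * U i p * (starRingEnd ℂ) (U j q)) • S p q) :
    (∀ i j, ∑ k, ∑ l, T i k * star (T l k) * T l j = T i j) ∧
    (∀ i j, ∑ r, star (T r i) * T r j
      = if i = j then (N : ℂ) • ∑ r, ∑ s, T r s * star (T r s) else 0) := by
  let ι := Unitization.inrNonUnitalStarAlgHom ℂ D
  have hι : Function.Injective ι := Unitization.inr_injective
  have hlam' : lam ∈ unitary ℂ := by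
    rw [Unitary.mem_iff_star_mul_self, Complex.star_def, Complex.conj_mul', hlam]
    norm_num
  have hS : ((Matrix.of S).map ι).IsQuantumCuntzKriegerFamily :=
    (Matrix.isQuantumCuntzKriegerFamily_map_iff hι).mpr
      ((Matrix.isQuantumCuntzKriegerFamily_of_iff S).mpr ⟨h1, h2⟩)
  have hTS : (Matrix.of T).map ι = (lam • U).map (algebraMap ℂ (Unitization ℂ D))
      * (Matrix.of S).map ι * (U.map (algebraMap ℂ (Unitization ℂ D))).conjTranspose := by
    refine Matrix.ext fun i j => ?_
    simp only [Matrix.map_algebraMap_mul_mul_conjTranspose_apply, Matrix.map_apply,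
      Matrix.of_apply, hT, map_sum, map_smul, Matrix.smul_apply, smul_eq_mul, starRingEnd_apply,
      mul_assoc]
  have hTconj := hS.map_algebraMap_conj hU (Unitary.smul_mem_of_mem hlam' hU)
  rw [← hTS, Matrix.isQuantumCuntzKriegerFamily_map_iff hι] at hTconj
  exact (Matrix.isQuantumCuntzKriegerFamily_of_iff T).mp hTconj

theorem statement_12 (D : Type*) [NonUnitalNormedRing D] [StarRing D] [CStarRing D]
    [CompleteSpace D] [NormedSpace ℂ D] [IsScalarTower ℂ D D] [SMulCommClass ℂ D D]
    [StarModule ℂ D]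
    (N : ℕ) (hN : 1 ≤ N)
    -- generators of FO(K(M_N(ℂ), tr)): relations of the complete quantum graph on M_N(ℂ)
    (S : Fin N → Fin N → D)
    (h1 : ∀ i j, ∑ k, ∑ l, S i k * star (S l k) * S l j = S i j)
    (h2 : ∀ i j, ∑ r, star (S r i) * S r j
      = if i = j then (N : ℂ) • ∑ r, ∑ s, S r s * star (S r s) else 0)
    -- a unitary U ∈ M_N(ℂ) and λ ∈ U(1)
    (U : Matrix (Fin N) (Fin N) ℂ) (hU : U ∈ Matrix.unitaryGroup (Fin N) ℂ)
    (lam : ℂ) (hlam : ‖lam‖ = 1)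
    -- T = λ U S U^*
    (T : Fin N → Fin N → D)
    (hT : ∀ i j, T i j = ∑ p, ∑ q, (lam * U i p * (starRingEnd ℂ) (U j q)) • S p q) :
    (∀ i j, ∑ k, ∑ l, T i k * star (T l k) * T l j = T i j) ∧
    (∀ i j, ∑ r, star (T r i) * T r j
      = if i = j then (N : ℂ) • ∑ r, ∑ s, T r s * star (T r s) else 0) :=
  statement_12_general D N S h1 h2 U hU lam hlam T hT
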